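/- arXiv:1409.4659 — 2 statements merged into one kernel-verified Lean document; each statement's English description precedes it below -/
import Mathlib

section
/- Let X be a normed space that is locally totally bounded. A set F ⊆ X is equi-homogeneous if and only if there exist constants M ≥ 1 and δ₁ > 0 such that sup_{x∈F} N(B_δ(x) ∩ F, ρ) ≤ M · inf_{x∈F} N(B_δ(x) ∩ F, ρ) for all δ, ρ with 0 < ρ < δ ≤ δ₁ (i.e. in a locally totally bounded normed space the constants c₁, c₂ in the definition of equi-homogeneity may be taken equal to 1). -/
/-! In a normed space whose unit ball is totally bounded, rescaling a finite cover of the unit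
ball shows that `N(B_δ(x) ∩ F, c δ)` is bounded by a constant depending only on `c`. Together with
the submultiplicativity `N(E, 2t) ≤ N(E, s) · sup_{y ∈ F} N(B_s(y) ∩ F, t)` for `E ⊆ F`, this
means that changing `δ` or `ρ` by a constant factor changes the supremum and the infimum of the
covering numbers only by a constant factor, which absorbs `c₁` and `c₂` into `M`. -/

open Set Metric Filter Bornology MeasureTheory
open scoped ENNReal NNReal

/-- `coverNumber F δ` : the minimum number of closed `δ`-balls with centres in
`F` needed to cover `F` (`∞` if there is no finite such cover). -/
noncomputable def coverNumber {X : Type*} [MetricSpace X] (F : Set X) (δ : ℝ) : ℝ≥0∞ :=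
  ⨅ (t : Finset X) (_ : (t : Set X) ⊆ F) (_ : F ⊆ ⋃ x ∈ t, closedBall x δ),
    (t.card : ℝ≥0∞)

/-- `F` is equi-homogeneous: for every `δ₀ > 0` there are `M ≥ 1` and
`c₁, c₂ > 0` with
`sup_{x∈F} N(B_δ(x) ∩ F, ρ) ≤ M inf_{x∈F} N(B_{c₁δ}(x) ∩ F, c₂ρ)`
for all `0 < ρ < δ ≤ δ₀`. -/
def EquiHomogeneous {X : Type*} [MetricSpace X] (F : Set X) : Prop :=
  ∀ δ₀ : ℝ, 0 < δ₀ → ∃ M c₁ c₂ : ℝ, 1 ≤ M ∧ 0 < c₁ ∧ 0 < c₂ ∧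
    ∀ δ ρ : ℝ, 0 < ρ → ρ < δ → δ ≤ δ₀ →
      (⨆ x ∈ F, coverNumber (closedBall x δ ∩ F) ρ) ≤
        ENNReal.ofReal M * (⨅ x ∈ F, coverNumber (closedBall x (c₁ * δ) ∩ F) (c₂ * ρ))

section MetricSpace

variable {X : Type*} [MetricSpace X]

lemma coverNumber_le_card {F : Set X} {ρ : ℝ} {t : Finset X} (ht : (t : Set X) ⊆ F)
    (hcov : F ⊆ ⋃ x ∈ t, closedBall x ρ) : coverNumber F ρ ≤ t.card :=
  iInf₂_le_of_le t ht (iInf_le _ hcov)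

lemma coverNumber_empty (ρ : ℝ) : coverNumber (∅ : Set X) ρ = 0 :=
  nonpos_iff_eq_zero.1 <| by
    simpa using coverNumber_le_card (F := ∅) (ρ := ρ) (t := ∅) (by simp) (by simp)

lemma one_le_coverNumber {F : Set X} (hF : F.Nonempty) (ρ : ℝ) : 1 ≤ coverNumber F ρ := by
  refine le_iInf₂ fun t _ => le_iInf fun hcov => ?_
  obtain ⟨y, hy, -⟩ := mem_iUnion₂.1 (hcov hF.some_mem)
  exact_mod_cast Finset.card_pos.2 ⟨y, hy⟩

lemma coverNumber_anti {F : Set X} {ρ ρ' : ℝ} (h : ρ ≤ ρ') :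
    coverNumber F ρ' ≤ coverNumber F ρ :=
  le_iInf₂ fun _ ht => le_iInf fun hcov =>
    coverNumber_le_card ht (hcov.trans (iUnion₂_mono fun _ _ => closedBall_subset_closedBall h))

lemma exists_coverNumber_eq_card {F : Set X} {ρ : ℝ} (h : coverNumber F ρ ≠ ⊤) :
    ∃ t : Finset X, (t : Set X) ⊆ F ∧ F ⊆ (⋃ x ∈ t, closedBall x ρ) ∧
      coverNumber F ρ = t.card := by
  have hex : ∃ n, ∃ t : Finset X, (t : Set X) ⊆ F ∧ F ⊆ (⋃ x ∈ t, closedBall x ρ) ∧ t.card = n := by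
    by_contra! hno
    exact h (eq_top_iff.2 (le_iInf₂ fun t ht => le_iInf fun hcov => (hno _ t ht hcov rfl).elim))
  classical
  obtain ⟨t, ht, hcov, hcard⟩ := Nat.find_spec hex
  refine ⟨t, ht, hcov, le_antisymm (coverNumber_le_card ht hcov) ?_⟩
  refine le_iInf₂ fun u hu => le_iInf fun hucov => ?_
  exact_mod_cast hcard ▸ Nat.find_min' hex ⟨u, hu, hucov, rfl⟩

lemma coverNumber_two_mul_le_card {F : Set X} {r : ℝ} {t : Finset X}
    (hcov : F ⊆ ⋃ z ∈ t, closedBall z r) : coverNumber F (2 * r) ≤ t.card := by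
  classical
  choose! g hg using fun z (hz : (closedBall z r ∩ F).Nonempty) => hz
  let t' := {z ∈ t | (closedBall z r ∩ F).Nonempty}
  refine (coverNumber_le_card (t := t'.image g) ?_ ?_).trans ?_
  · simp only [Finset.coe_image, image_subset_iff]
    exact fun z hz => (hg z (Finset.mem_filter.1 hz).2).2
  · intro x hx
    obtain ⟨z, hz, hxz⟩ := mem_iUnion₂.1 (hcov hx)
    have hne : (closedBall z r ∩ F).Nonempty := ⟨x, hxz, hx⟩
    refine mem_iUnion₂.2 ⟨g z, Finset.mem_image_of_mem g (Finset.mem_filter.2 ⟨hz, hne⟩), ?_⟩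
    calc dist x (g z) ≤ dist x z + dist (g z) z := dist_triangle_right _ _ _
      _ ≤ r + r := add_le_add hxz (hg z hne).1
      _ = 2 * r := by ring
  · exact_mod_cast Finset.card_image_le.trans (Finset.card_filter_le _ _)

lemma coverNumber_two_mul_le_mul_iSup {E F : Set X} (hEF : E ⊆ F) {s t : ℝ} (hs : 0 ≤ s) :
    coverNumber E (2 * t) ≤ coverNumber E s * ⨆ y ∈ F, coverNumber (closedBall y s ∩ F) t := by
  classical
  rcases E.eq_empty_or_nonempty with rfl | hE
  · simp [coverNumber_empty]
  set S := ⨆ y ∈ F, coverNumber (closedBall y s ∩ F) t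
  obtain ⟨y₀, hy₀⟩ := hE
  have hS : 1 ≤ S := le_iSup₂_of_le y₀ (hEF hy₀)
    (one_le_coverNumber (F := closedBall y₀ s ∩ F) ⟨y₀, mem_closedBall_self hs, hEF hy₀⟩ t)
  by_cases htop : coverNumber E s = ⊤ ∨ S = ⊤
  · refine (ENNReal.mul_eq_top.2 ?_).symm ▸ le_top
    rcases htop with h | h
    · exact Or.inr ⟨h, (one_pos.trans_le hS).ne'⟩
    · exact Or.inl ⟨(one_pos.trans_le (one_le_coverNumber ⟨y₀, hy₀⟩ s)).ne', h⟩
  push Not at htop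
  obtain ⟨A, hAE, hAcov, hAcard⟩ := exists_coverNumber_eq_card htop.1
  have hball : ∀ y ∈ A, coverNumber (closedBall y s ∩ F) t ≤ S := fun y hy =>
    le_iSup₂_of_le y (hEF (hAE hy)) le_rfl
  choose! C _ hCcov hCcard using fun y hy =>
    exists_coverNumber_eq_card ((hball y hy).trans_lt htop.2.lt_top).ne
  have hcov : E ⊆ ⋃ z ∈ A.biUnion C, closedBall z t := by
    intro x hx
    obtain ⟨y, hy, hxy⟩ := mem_iUnion₂.1 (hAcov hx)
    obtain ⟨z, hz, hxz⟩ := mem_iUnion₂.1 (hCcov y hy ⟨hxy, hEF hx⟩)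
    exact mem_iUnion₂.2 ⟨z, Finset.mem_biUnion.2 ⟨y, hy, hz⟩, hxz⟩
  calc coverNumber E (2 * t) ≤ (A.biUnion C).card := coverNumber_two_mul_le_card hcov
    _ ≤ ∑ y ∈ A, ((C y).card : ℝ≥0∞) := by exact_mod_cast Finset.card_biUnion_le
    _ ≤ ∑ _y ∈ A, S := Finset.sum_le_sum fun y hy => hCcard y hy ▸ hball y hy
    _ = coverNumber E s * S := by rw [Finset.sum_const, nsmul_eq_mul, hAcard]

end MetricSpace

section NormedSpace

variable {X : Type*} [NormedAddCommGroup X] [NormedSpace ℝ X]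

lemma exists_coverNumber_closedBall_inter_le (h : TotallyBounded (closedBall (0 : X) 1))
    {c : ℝ} (hc : 0 < c) :
    ∃ K : ℕ, 1 ≤ K ∧ ∀ (F : Set X) (x : X) (δ : ℝ), 0 < δ →
      coverNumber (closedBall x δ ∩ F) (c * δ) ≤ K := by
  classical
  obtain ⟨t, htfin, hcov⟩ := totallyBounded_iff.1 h (c / 2) (half_pos hc)
  refine ⟨htfin.toFinset.card + 1, Nat.le_add_left _ _, fun F x δ hδ => ?_⟩
  have hcovδ : closedBall x δ ∩ F ⊆
      ⋃ z ∈ htfin.toFinset.image (fun y => x + δ • y), closedBall z (c / 2 * δ) := by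
    rintro w ⟨hw, -⟩
    have hv : δ⁻¹ • (w - x) ∈ closedBall (0 : X) 1 := by
      rw [mem_closedBall_zero_iff, norm_smul, norm_inv, Real.norm_of_nonneg hδ.le,
        inv_mul_le_one₀ hδ, ← dist_eq_norm]
      exact hw
    obtain ⟨y, hy, hvy⟩ := mem_iUnion₂.1 (hcov hv)
    refine mem_iUnion₂.2 ⟨x + δ • y, Finset.mem_image_of_mem _ (htfin.mem_toFinset.2 hy), ?_⟩
    have hscale : w - (x + δ • y) = δ • (δ⁻¹ • (w - x) - y) := by
      rw [smul_sub, smul_inv_smul₀ hδ.ne']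
      abel
    rw [mem_closedBall, dist_eq_norm, hscale, norm_smul, Real.norm_of_nonneg hδ.le, mul_comm]
    exact mul_le_mul_of_nonneg_right (mem_ball_iff_norm.1 hvy).le hδ.le
  calc coverNumber (closedBall x δ ∩ F) (c * δ)
      = coverNumber (closedBall x δ ∩ F) (2 * (c / 2 * δ)) := by ring_nf
    _ ≤ _ := coverNumber_two_mul_le_card hcovδ
    _ ≤ _ := by exact_mod_cast Finset.card_image_le.trans (Nat.le_succ _)

lemma exists_coverNumber_mul_le (h : TotallyBounded (closedBall (0 : X) 1)) {c : ℝ} (hc : 0 < c) :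
    ∃ K : ℕ, 1 ≤ K ∧ ∀ (E : Set X) (ρ : ℝ), 0 < ρ →
      coverNumber E (c * ρ) ≤ K * coverNumber E ρ := by
  obtain ⟨K, hK, hball⟩ := exists_coverNumber_closedBall_inter_le h (half_pos hc)
  refine ⟨K, hK, fun E ρ hρ => ?_⟩
  calc coverNumber E (c * ρ) = coverNumber E (2 * (c / 2 * ρ)) := by ring_nf
    _ ≤ coverNumber E ρ * ⨆ y ∈ E, coverNumber (closedBall y ρ ∩ E) (c / 2 * ρ) :=
      coverNumber_two_mul_le_mul_iSup subset_rfl hρ.le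
    _ ≤ coverNumber E ρ * K := by gcongr; exact iSup₂_le fun y _ => hball E y ρ hρ
    _ = K * coverNumber E ρ := mul_comm _ _

lemma exists_iInf_coverNumber_le_mul_iInf (h : TotallyBounded (closedBall (0 : X) 1)) {c : ℝ}
    (hc : 0 < c) :
    ∃ K : ℕ, 1 ≤ K ∧ ∀ (F : Set X) (δ ρ : ℝ), 0 < ρ →
      (⨅ x ∈ F, coverNumber (closedBall x δ ∩ F) (c * ρ)) ≤
        K * ⨅ x ∈ F, coverNumber (closedBall x δ ∩ F) ρ := by
  obtain ⟨K, hK, hmul⟩ := exists_coverNumber_mul_le h hc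
  refine ⟨K, hK, fun F δ ρ hρ => ?_⟩
  have hK₀ : (K : ℝ≥0∞) ≠ 0 := by exact_mod_cast Nat.one_le_iff_ne_zero.1 hK
  simp only [ENNReal.mul_iInf_of_ne hK₀ (ENNReal.natCast_ne_top K)]
  exact iInf₂_mono fun x _ => hmul _ ρ hρ

lemma exists_iSup_coverNumber_le_mul_iSup (h : TotallyBounded (closedBall (0 : X) 1)) {a : ℝ}
    (ha : 0 < a) :
    ∃ K : ℕ, 1 ≤ K ∧ ∀ (F : Set X) (δ ρ : ℝ), 0 < δ →
      (⨆ x ∈ F, coverNumber (closedBall x δ ∩ F) (2 * ρ)) ≤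
        K * ⨆ y ∈ F, coverNumber (closedBall y (a * δ) ∩ F) ρ := by
  obtain ⟨K, hK, hball⟩ := exists_coverNumber_closedBall_inter_le h ha
  refine ⟨K, hK, fun F δ ρ hδ => iSup₂_le fun x _ => ?_⟩
  calc coverNumber (closedBall x δ ∩ F) (2 * ρ)
      ≤ coverNumber (closedBall x δ ∩ F) (a * δ) *
          ⨆ y ∈ F, coverNumber (closedBall y (a * δ) ∩ F) ρ :=
        coverNumber_two_mul_le_mul_iSup inter_subset_right (by positivity)
    _ ≤ K * ⨆ y ∈ F, coverNumber (closedBall y (a * δ) ∩ F) ρ := by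
        gcongr; exact hball F x δ hδ

theorem EquiHomogeneous.exists_iSup_le_ofReal_mul_iInf (h : TotallyBounded (closedBall (0 : X) 1))
    {F : Set X} (hF : EquiHomogeneous F) :
    ∃ M δ₁ : ℝ, 1 ≤ M ∧ 0 < δ₁ ∧ ∀ δ ρ : ℝ, 0 < ρ → ρ < δ → δ ≤ δ₁ →
      (⨆ x ∈ F, coverNumber (closedBall x δ ∩ F) ρ) ≤
        ENNReal.ofReal M * (⨅ x ∈ F, coverNumber (closedBall x δ ∩ F) ρ) := by
  obtain ⟨M, c₁, c₂, hM, hc₁, hc₂, hF⟩ := hF 1 one_pos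
  set k := 2 * (1 + c₁)
  have hk : 0 < k := by positivity
  obtain ⟨K₁, hK₁, hsup⟩ := exists_iSup_coverNumber_le_mul_iSup h (inv_pos.2 hc₁)
  obtain ⟨K₂, hK₂, hinf⟩ := exists_iInf_coverNumber_le_mul_iInf h (div_pos hc₂ hk)
  have hK₁' : (1 : ℝ) ≤ K₁ := by exact_mod_cast hK₁
  have hK₂' : (1 : ℝ) ≤ K₂ := by exact_mod_cast hK₂
  refine ⟨K₁ * M * K₂, c₁,
    one_le_mul_of_one_le_of_one_le (one_le_mul_of_one_le_of_one_le hK₁' hM) hK₂', hc₁,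
    fun δ ρ hρ hρδ hδ => ?_⟩
  have hδpos : 0 < δ := hρ.trans hρδ
  -- `k` grows with `c₁` so that `ρ / k` stays below `c₁⁻¹ * δ`, where `hF` is applied.
  have h2ρ : 2 * (ρ / k) ≤ ρ := by
    rw [mul_div_assoc', div_le_iff₀ hk]; nlinarith
  have hρδ' : ρ / k < c₁⁻¹ * δ := by
    rw [div_lt_iff₀ hk, inv_mul_eq_div, div_mul_eq_mul_div, lt_div_iff₀ hc₁]; nlinarith
  have hδ' : c₁⁻¹ * δ ≤ 1 := by
    rw [inv_mul_le_one₀ hc₁]; exact hδ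
  calc (⨆ x ∈ F, coverNumber (closedBall x δ ∩ F) ρ)
      ≤ ⨆ x ∈ F, coverNumber (closedBall x δ ∩ F) (2 * (ρ / k)) :=
        iSup₂_mono fun _ _ => coverNumber_anti h2ρ
    _ ≤ K₁ * ⨆ y ∈ F, coverNumber (closedBall y (c₁⁻¹ * δ) ∩ F) (ρ / k) := hsup F δ _ hδpos
    _ ≤ K₁ * (ENNReal.ofReal M *
          ⨅ x ∈ F, coverNumber (closedBall x (c₁ * (c₁⁻¹ * δ)) ∩ F) (c₂ * (ρ / k))) := by
        gcongr; exact hF _ _ (by positivity) hρδ' hδ'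
    _ = K₁ * (ENNReal.ofReal M * ⨅ x ∈ F, coverNumber (closedBall x δ ∩ F) (c₂ / k * ρ)) := by
        rw [mul_inv_cancel_left₀ hc₁.ne', mul_div_assoc', div_mul_eq_mul_div]
    _ ≤ K₁ * (ENNReal.ofReal M * (K₂ * ⨅ x ∈ F, coverNumber (closedBall x δ ∩ F) ρ)) := by
        gcongr; exact hinf F δ ρ hρ
    _ = ENNReal.ofReal (K₁ * M * K₂) * ⨅ x ∈ F, coverNumber (closedBall x δ ∩ F) ρ := by
        rw [ENNReal.ofReal_mul (by positivity), ENNReal.ofReal_mul (by positivity),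
          ENNReal.ofReal_natCast, ENNReal.ofReal_natCast]
        ring

theorem equiHomogeneous_of_iSup_le_ofReal_mul_iInf (h : TotallyBounded (closedBall (0 : X) 1))
    {F : Set X} (hF : ∃ M δ₁ : ℝ, 1 ≤ M ∧ 0 < δ₁ ∧ ∀ δ ρ : ℝ, 0 < ρ → ρ < δ → δ ≤ δ₁ →
      (⨆ x ∈ F, coverNumber (closedBall x δ ∩ F) ρ) ≤
        ENNReal.ofReal M * (⨅ x ∈ F, coverNumber (closedBall x δ ∩ F) ρ)) :
    EquiHomogeneous F := by
  obtain ⟨M, δ₁, hM, hδ₁, hF⟩ := hF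
  intro δ₀ hδ₀
  set c := min 1 (δ₁ / δ₀)
  have hc : 0 < c := lt_min one_pos (div_pos hδ₁ hδ₀)
  obtain ⟨K, hK, hsup⟩ := exists_iSup_coverNumber_le_mul_iSup h hc
  refine ⟨K * M, c, c / 2, one_le_mul_of_one_le_of_one_le (by exact_mod_cast hK) hM, hc,
    half_pos hc, fun δ ρ hρ hρδ hδ => ?_⟩
  have hδpos : 0 < δ := hρ.trans hρδ
  have h2ρ : 2 * (c / 2 * ρ) ≤ ρ := by
    rw [← mul_assoc, mul_div_cancel₀ c two_ne_zero]
    exact mul_le_of_le_one_left hρ.le (min_le_left _ _)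
  have hρδ' : c / 2 * ρ < c * δ := by nlinarith
  have hcδ : c * δ ≤ δ₁ :=
    calc c * δ ≤ δ₁ / δ₀ * δ₀ := mul_le_mul (min_le_right _ _) hδ hδpos.le (by positivity)
      _ = δ₁ := div_mul_cancel₀ _ hδ₀.ne'
  calc (⨆ x ∈ F, coverNumber (closedBall x δ ∩ F) ρ)
      ≤ ⨆ x ∈ F, coverNumber (closedBall x δ ∩ F) (2 * (c / 2 * ρ)) :=
        iSup₂_mono fun _ _ => coverNumber_anti h2ρ
    _ ≤ K * ⨆ y ∈ F, coverNumber (closedBall y (c * δ) ∩ F) (c / 2 * ρ) := hsup F δ _ hδpos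
    _ ≤ K * (ENNReal.ofReal M * ⨅ x ∈ F, coverNumber (closedBall x (c * δ) ∩ F) (c / 2 * ρ)) := by
        gcongr; exact hF _ _ (by positivity) hρδ' hcδ
    _ = ENNReal.ofReal (K * M) * ⨅ x ∈ F, coverNumber (closedBall x (c * δ) ∩ F) (c / 2 * ρ) := by
        rw [ENNReal.ofReal_mul (by positivity), ENNReal.ofReal_natCast, mul_assoc]

end NormedSpace

/-- In a locally totally bounded normed space, `F` is
equi-homogeneous iff the equi-homogeneity inequality holds with
`c₁ = c₂ = 1` for some `δ₁ > 0`. -/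
theorem equiHomogeneous_iff_of_normedSpace {X : Type*} [NormedAddCommGroup X]
    [NormedSpace ℝ X]
    (hX : ∀ (x : X) (r : ℝ), TotallyBounded (closedBall x r)) (F : Set X) :
    EquiHomogeneous F ↔
      ∃ M δ₁ : ℝ, 1 ≤ M ∧ 0 < δ₁ ∧
        ∀ δ ρ : ℝ, 0 < ρ → ρ < δ → δ ≤ δ₁ →
          (⨆ x ∈ F, coverNumber (closedBall x δ ∩ F) ρ) ≤
            ENNReal.ofReal M * (⨅ x ∈ F, coverNumber (closedBall x δ ∩ F) ρ) :=
  ⟨EquiHomogeneous.exists_iSup_le_ofReal_mul_iInf (hX 0 1),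
    equiHomogeneous_of_iSup_le_ofReal_mul_iInf (hX 0 1)⟩
end

section
/- If a non-autonomous iterated function system of similarities satisfies the generalised Moran open-set condition and inf{σ_i : i ∈ ℕ} = σ* > 0, then there is a constant κ₀ (one may take κ₀ = λ(B_1(0))·(2η/σ*)^d / ε₀), independent of k, δ and x, such that for every k ∈ ℕ₀, every δ with 0 < δ ≤ η, and every x ∈ ℝ^d, the set A^k_δ = {α ∈ J^k_δ : f_α(closure(U^{n_α})) ∩ B_δ(x) ≠ ∅} has cardinality at most κ₀. -/
open Set Metric Filter Bornology MeasureTheory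
open scoped ENNReal NNReal

/-- A non-autonomous iterated function system: contractions `f i` with ratios
`σ i ∈ (0,1)` and finite nonempty index sets `I k ⊆ ℕ` for `k ≥ 1`. -/
structure NAIFS (E : Type*) [MetricSpace E] where
  f : ℕ → E → E
  σ : ℕ → ℝ
  σ_pos : ∀ i, 0 < σ i
  σ_lt_one : ∀ i, σ i < 1
  contract : ∀ i x y, dist (f i x) (f i y) ≤ σ i * dist x y
  I : ℕ → Finset ℕ
  I_nonempty : ∀ k, 1 ≤ k → (I k).Nonempty

variable {E : Type*} [MetricSpace E]

/-- `S^k(B) = ⋃_{i ∈ I_{k+1}} f_i(B)`. -/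
def Sstep (sys : NAIFS E) (k : ℕ) (B : Set E) : Set E :=
  ⋃ i ∈ sys.I (k + 1), sys.f i '' B

/-- `SiterN sys k n B = S^{k, k+n}(B) = S^k ∘ ⋯ ∘ S^{k+n-1} (B)`. -/
def SiterN (sys : NAIFS E) : ℕ → ℕ → Set E → Set E
  | _, 0, B => B
  | k, n + 1, B => Sstep sys k (SiterN sys (k + 1) n B)

/-- Hausdorff semi-distance `ρ_H(A,B) = sup_{x ∈ A} inf_{y ∈ B} d(x,y)`. -/
noncomputable def semidist (A B : Set E) : ℝ≥0∞ :=
  ⨆ x ∈ A, EMetric.infEdist x B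

/-- `{F^k}` is a pullback attractor: each `F^k` compact, uniformly bounded,
invariant `F^k = S^k(F^{k+1})`, and `ρ_H(S^{k,l}(B), F^k) → 0` as `l → ∞`
for every bounded `B`. -/
def IsPullbackAttractor (sys : NAIFS E) (F : ℕ → Set E) : Prop :=
  (∀ k, IsCompact (F k)) ∧
  IsBounded (⋃ k, F k) ∧
  (∀ k, F k = Sstep sys k (F (k + 1))) ∧
  (∀ B : Set E, IsBounded B → ∀ k,
    Tendsto (fun l => semidist (SiterN sys k (l - k) B) (F k)) atTop (nhds 0))

/-- The generalised Moran open-set condition: uniformly bounded nonempty open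
sets `U^k` with `S^k(U^{k+1}) ⊆ U^k`, `f_i(U^k) ∩ f_j(U^k) = ∅` for distinct
`i, j ∈ I_k`, and `λ(U^k) ≥ ε₀ > 0`. -/
def GenMoranOSC {d : ℕ} (sys : NAIFS (EuclideanSpace ℝ (Fin d)))
    (U : ℕ → Set (EuclideanSpace ℝ (Fin d))) (ε₀ : ℝ) : Prop :=
  (∀ k, (U k).Nonempty) ∧
  (∀ k, IsOpen (U k)) ∧
  IsBounded (⋃ k, U k) ∧
  (∀ k, Sstep sys k (U (k + 1)) ⊆ U k) ∧
  (∀ k, 1 ≤ k → ∀ i ∈ sys.I k, ∀ j ∈ sys.I k, i ≠ j →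
    sys.f i '' U k ∩ sys.f j '' U k = ∅) ∧
  0 < ε₀ ∧
  (∀ k, ENNReal.ofReal ε₀ ≤ volume (U k))

/-- `wordSet sys k n` is `J^{k,k+n} = I_{k+1} × ⋯ × I_{k+n}`, as a finite set
of words (lists). -/
def wordSet (sys : NAIFS E) : ℕ → ℕ → Finset (List ℕ)
  | _, 0 => {([] : List ℕ)}
  | k, n + 1 => Finset.image (fun p : ℕ × List ℕ => p.1 :: p.2)
      (sys.I (k + 1) ×ˢ wordSet sys (k + 1) n)

/-- `σ_α = σ_{i_1} ⋯ σ_{i_n}` for a word `α = (i_1, …, i_n)`. -/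
noncomputable def sigmaWord (sys : NAIFS E) (α : List ℕ) : ℝ :=
  (α.map sys.σ).prod

/-- `f_α = f_{i_1} ∘ ⋯ ∘ f_{i_n}` for a word `α = (i_1, …, i_n)`. -/
def mapWord (sys : NAIFS E) (α : List ℕ) : E → E :=
  α.foldr (fun i g => sys.f i ∘ g) id

/-- `J^k_δ = {α ∈ J^k : σ_α η < δ ≤ σ_{α'} η}`, where `α'` is the truncation
of `α` (with `σ_{α'} = 1` when `α` has length 1). -/
def Jset (sys : NAIFS E) (η : ℝ) (k : ℕ) (δ : ℝ) : Set (List ℕ) :=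
  {α | (∃ n : ℕ, 1 ≤ n ∧ α ∈ wordSet sys k n) ∧
    sigmaWord sys α * η < δ ∧ δ ≤ sigmaWord sys α.dropLast * η}

/-! The images `f_α(U^{n_α})`, `α ∈ A^k_δ`, are pairwise disjoint, since no word of `J^k_δ` is a
proper prefix of another. Each lies in `B_{2δ}(x)`, its diameter being at most `σ_α η < δ`, and
each has volume `σ_α^d λ(U^{n_α}) ≥ (σ* δ / η)^d ε₀`, because `σ_α ≥ σ* σ_{α'}` and
`σ_{α'} η ≥ δ`. Comparing with `λ(B_{2δ}(x)) = (2δ)^d λ(B_1(0))` bounds their number. -/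

open scoped Pointwise

lemma injective_of_dist_eq_mul {f : E → E} {c : ℝ} (hc : 0 < c)
    (hf : ∀ x y, dist (f x) (f y) = c * dist x y) : Function.Injective f := fun x y hxy => by
  simpa [hxy, hc.ne'] using (hf x y).symm

section Words

variable (sys : NAIFS E)

@[simp] lemma sigmaWord_nil : sigmaWord sys [] = 1 := rfl

@[simp] lemma sigmaWord_cons (i : ℕ) (α : List ℕ) :
    sigmaWord sys (i :: α) = sys.σ i * sigmaWord sys α := List.prod_cons

@[simp] lemma sigmaWord_append (α β : List ℕ) :
    sigmaWord sys (α ++ β) = sigmaWord sys α * sigmaWord sys β := by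
  simp [sigmaWord]

lemma sigmaWord_pos (α : List ℕ) : 0 < sigmaWord sys α := by
  induction α with
  | nil => simp
  | cons i α ih => simpa using mul_pos (sys.σ_pos i) ih

lemma sigmaWord_le_one (α : List ℕ) : sigmaWord sys α ≤ 1 := by
  induction α with
  | nil => simp
  | cons i α ih => simpa using mul_le_one₀ (sys.σ_lt_one i).le (sigmaWord_pos sys α).le ih

lemma mapWord_cons (i : ℕ) (α : List ℕ) : mapWord sys (i :: α) = sys.f i ∘ mapWord sys α := rfl

variable {sys}

lemma dist_mapWord (hsim : ∀ i x y, dist (sys.f i x) (sys.f i y) = sys.σ i * dist x y)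
    (α : List ℕ) (x y : E) :
    dist (mapWord sys α x) (mapWord sys α y) = sigmaWord sys α * dist x y := by
  induction α with
  | nil => simp [mapWord]
  | cons i α ih => simp [mapWord_cons, hsim, ih, mul_assoc]

@[simp] lemma mem_wordSet_zero {k : ℕ} {α : List ℕ} : α ∈ wordSet sys k 0 ↔ α = [] := by
  simp [wordSet]

@[simp] lemma cons_mem_wordSet_succ {k n i : ℕ} {α : List ℕ} :
    i :: α ∈ wordSet sys k (n + 1) ↔ i ∈ sys.I (k + 1) ∧ α ∈ wordSet sys (k + 1) n := by
  simp [wordSet]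

lemma length_of_mem_wordSet {k n : ℕ} {α : List ℕ} (h : α ∈ wordSet sys k n) : α.length = n := by
  induction n generalizing k α with
  | zero => simpa using h
  | succ n ih =>
    cases α with
    | nil => simp [wordSet] at h
    | cons i α => simpa using ih (cons_mem_wordSet_succ.1 h).2

variable {U : ℕ → Set E}

lemma mapWord_cons_image (k i : ℕ) (α : List ℕ) :
    mapWord sys (i :: α) '' U (k + (i :: α).length) =
      sys.f i '' (mapWord sys α '' U (k + 1 + α.length)) := by
  rw [mapWord_cons, image_comp, List.length_cons, ← add_assoc, Nat.add_right_comm]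

lemma mapWord_image_subset (hinv : ∀ k, Sstep sys k (U (k + 1)) ⊆ U k) {k : ℕ} {α : List ℕ}
    (hα : α ∈ wordSet sys k α.length) : mapWord sys α '' U (k + α.length) ⊆ U k := by
  induction α generalizing k with
  | nil => simp [mapWord]
  | cons i α ih =>
    rw [List.length_cons, cons_mem_wordSet_succ] at hα
    rw [mapWord_cons_image]
    exact (image_mono (ih hα.2)).trans
      ((subset_biUnion_of_mem (u := fun j => sys.f j '' U (k + 1)) hα.1).trans (hinv k))

lemma disjoint_mapWord_image (hinv : ∀ k, Sstep sys k (U (k + 1)) ⊆ U k)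
    (hdisj : ∀ k, 1 ≤ k → ∀ i ∈ sys.I k, ∀ j ∈ sys.I k, i ≠ j →
      sys.f i '' U k ∩ sys.f j '' U k = ∅)
    (hinj : ∀ i, Function.Injective (sys.f i)) {k : ℕ} {α β : List ℕ}
    (hα : α ∈ wordSet sys k α.length) (hβ : β ∈ wordSet sys k β.length)
    (hαβ : ¬ α <+: β) (hβα : ¬ β <+: α) :
    Disjoint (mapWord sys α '' U (k + α.length)) (mapWord sys β '' U (k + β.length)) := by
  induction α generalizing k β with
  | nil => exact absurd β.nil_prefix hαβ
  | cons i α ih =>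
    cases β with
    | nil => exact absurd (i :: α).nil_prefix hβα
    | cons j β =>
      rw [List.length_cons, cons_mem_wordSet_succ] at hα hβ
      rw [mapWord_cons_image, mapWord_cons_image]
      by_cases hij : i = j
      · subst hij
        rw [List.cons_prefix_cons] at hαβ hβα
        exact disjoint_image_of_injective (hinj i)
          (ih hα.2 hβ.2 (fun h => hαβ ⟨rfl, h⟩) (fun h => hβα ⟨rfl, h⟩))
      · exact (disjoint_iff_inter_eq_empty.2 (hdisj (k + 1) le_add_self i hα.1 j hβ.1 hij)).mono
          (image_mono (mapWord_image_subset hinv hα.2))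
          (image_mono (mapWord_image_subset hinv hβ.2))

end Words

section Jset

variable {sys : NAIFS E} {η δ : ℝ} {k : ℕ} {α β : List ℕ}

lemma mem_wordSet_of_mem_Jset (hα : α ∈ Jset sys η k δ) : α ∈ wordSet sys k α.length := by
  obtain ⟨⟨n, -, hn⟩, -⟩ := hα
  rwa [length_of_mem_wordSet hn]

lemma ne_nil_of_mem_Jset (hα : α ∈ Jset sys η k δ) : α ≠ [] := by
  obtain ⟨⟨n, hn1, hn⟩, -⟩ := hα
  exact List.ne_nil_of_length_pos (by rw [length_of_mem_wordSet hn]; exact hn1)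

lemma not_prefix_of_mem_Jset (hη : 0 ≤ η) (hα : α ∈ Jset sys η k δ) (hβ : β ∈ Jset sys η k δ)
    (hne : α ≠ β) : ¬ α <+: β := by
  rintro ⟨t, rfl⟩
  have ht : t ≠ [] := by rintro rfl; simp at hne
  have hle := hβ.2.2
  rw [List.dropLast_append_of_ne_nil ht, sigmaWord_append, mul_assoc] at hle
  exact (hα.2.1.trans_le (hle.trans (mul_le_mul_of_nonneg_left
    (mul_le_of_le_one_left hη (sigmaWord_le_one sys _)) (sigmaWord_pos sys α).le))).false

lemma mul_le_sigmaWord_mul_of_mem_Jset {s : ℝ} (hs : ∀ i, s ≤ sys.σ i) (hδ : 0 ≤ δ)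
    (hα : α ∈ Jset sys η k δ) : s * δ ≤ sigmaWord sys α * η := by
  have hsplit := List.dropLast_append_getLast (ne_nil_of_mem_Jset hα)
  calc s * δ ≤ sys.σ (α.getLast (ne_nil_of_mem_Jset hα)) * (sigmaWord sys α.dropLast * η) :=
        mul_le_mul (hs _) hα.2.2 hδ (sys.σ_pos _).le
    _ = sigmaWord sys α * η := by
        conv_rhs => rw [← hsplit]
        simp only [sigmaWord_append, sigmaWord_cons, sigmaWord_nil]
        ring

lemma mapWord_image_subset_closedBall_of_mem_Jset
    (hsim : ∀ i x y, dist (sys.f i x) (sys.f i y) = sys.σ i * dist x y)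
    (hα : α ∈ Jset sys η k δ) {S : Set E} (hS : IsBounded S) (hSη : diam S ≤ η) {x : E}
    (hx : (mapWord sys α '' S ∩ closedBall x δ).Nonempty) :
    mapWord sys α '' S ⊆ closedBall x (2 * δ) := by
  obtain ⟨-, ⟨a, ha, rfl⟩, hax⟩ := hx
  rintro - ⟨b, hb, rfl⟩
  rw [mem_closedBall] at hax ⊢
  have hba : dist (mapWord sys α b) (mapWord sys α a) ≤ sigmaWord sys α * η := by
    rw [dist_mapWord hsim]
    exact mul_le_mul_of_nonneg_left ((dist_le_diam_of_mem hS hb ha).trans hSη)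
      (sigmaWord_pos sys α).le
  linarith [dist_triangle (mapWord sys α b) (mapWord sys α a) x, hα.2.1]

variable {U : ℕ → Set E}

lemma pairwiseDisjoint_mapWord_image_Jset (hη : 0 ≤ η)
    (hinv : ∀ k, Sstep sys k (U (k + 1)) ⊆ U k)
    (hdisj : ∀ k, 1 ≤ k → ∀ i ∈ sys.I k, ∀ j ∈ sys.I k, i ≠ j →
      sys.f i '' U k ∩ sys.f j '' U k = ∅)
    (hinj : ∀ i, Function.Injective (sys.f i)) :
    (Jset sys η k δ).PairwiseDisjoint (fun α => mapWord sys α '' U (k + α.length)) :=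
  fun _ hα _ hβ hne => disjoint_mapWord_image hinv hdisj hinj (mem_wordSet_of_mem_Jset hα)
    (mem_wordSet_of_mem_Jset hβ) (not_prefix_of_mem_Jset hη hα hβ hne)
    (not_prefix_of_mem_Jset hη hβ hα hne.symm)

end Jset

lemma MeasureTheory.finite_and_ncard_mul_le_of_pairwiseDisjoint {X ι : Type*}
    [MeasurableSpace X] {μ : Measure X} {A : Set ι} {s : ι → Set X} {T : Set X} {c : ℝ≥0∞}
    (hc : c ≠ 0) (hT : μ T ≠ ∞) (hdisj : A.PairwiseDisjoint s)
    (hmeas : ∀ i ∈ A, MeasurableSet (s i)) (hsub : ∀ i ∈ A, s i ⊆ T)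
    (hle : ∀ i ∈ A, c ≤ μ (s i)) : A.Finite ∧ A.ncard * c ≤ μ T := by
  have key : ∀ F : Finset ι, ↑F ⊆ A → F.card * c ≤ μ T := fun F hF => calc
    F.card * c = ∑ _i ∈ F, c := by rw [Finset.sum_const, nsmul_eq_mul]
    _ ≤ ∑ i ∈ F, μ (s i) := Finset.sum_le_sum fun i hi => hle i (hF hi)
    _ = μ (⋃ i ∈ F, s i) :=
      (measure_biUnion_finset (hdisj.subset hF) fun i hi => hmeas i (hF hi)).symm
    _ ≤ μ T := measure_mono (iUnion₂_subset fun i hi => hsub i (hF hi))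
  by_cases hA : A.Finite
  · obtain ⟨F, rfl⟩ := hA.exists_finset_coe
    exact ⟨F.finite_toSet, by simpa using key F subset_rfl⟩
  · obtain ⟨n, hn⟩ := ENNReal.exists_nat_gt (ENNReal.div_lt_top hT hc).ne
    obtain ⟨F, hF, rfl⟩ := Set.Infinite.exists_subset_card_eq hA n
    exact absurd (ENNReal.le_div_iff_mul_le (Or.inl hc) (Or.inr hT) |>.2 (key F hF)) hn.not_ge

section Similarity

variable {V : Type*} [NormedAddCommGroup V] [InnerProductSpace ℝ V] [FiniteDimensional ℝ V]
  [MeasurableSpace V] [BorelSpace V]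

lemma volume_image_of_dist_eq_mul {f : V → V} {c : ℝ} (hc : 0 < c)
    (hf : ∀ x y, dist (f x) (f y) = c * dist x y) (s : Set V) :
    volume (f '' s) = ENNReal.ofReal (c ^ Module.finrank ℝ V) * volume s := by
  have hiso : Isometry (fun x => c⁻¹ • f x) := Isometry.of_dist_eq fun x y => by
    rw [dist_smul₀, hf, Real.norm_of_nonneg (inv_nonneg.2 hc.le), inv_mul_cancel_left₀ hc.ne']
  have himage : f '' s = c • ((fun x => c⁻¹ • f x) '' s) := by
    rw [← image_smul, image_image]
    simp [smul_inv_smul₀ hc.ne']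
  rw [himage, ← InnerProductSpace.euclideanHausdorffMeasure_eq_volume,
    Measure.euclideanHausdorffMeasure_smul₀ _ hc.ne', hiso.euclideanHausdorffMeasure_image,
    ENNReal.smul_def, smul_eq_mul, ENNReal.ofReal_pow hc.le, ← Real.enorm_of_nonneg hc.le]
  simp [enorm]

lemma measurableSet_image_of_dist_eq_mul {f : V → V} {c : ℝ} (hc : 0 < c)
    (hf : ∀ x y, dist (f x) (f y) = c * dist x y) {s : Set V} (hs : MeasurableSet s) :
    MeasurableSet (f '' s) :=
  hs.image_of_continuousOn_injOn
    (LipschitzWith.of_dist_le_mul (K := ⟨c, hc.le⟩) fun x y => (hf x y).le).continuous.continuousOn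
    (injective_of_dist_eq_mul hc hf).injOn

end Similarity

def Aset (sys : NAIFS E) (U : ℕ → Set E) (η : ℝ) (k : ℕ) (δ : ℝ) (x : E) : Set (List ℕ) :=
  {α ∈ Jset sys η k δ | (mapWord sys α '' closure (U (k + α.length)) ∩ closedBall x δ).Nonempty}

theorem finite_Aset_and_ncard_mul_le {d : ℕ} {sys : NAIFS (EuclideanSpace ℝ (Fin d))}
    (hsim : ∀ i x y, dist (sys.f i x) (sys.f i y) = sys.σ i * dist x y)
    {U : ℕ → Set (EuclideanSpace ℝ (Fin d))} {ε₀ : ℝ} (hosc : GenMoranOSC sys U ε₀)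
    {η δ s : ℝ} (hUη : ∀ m, diam (closure (U m)) ≤ η) (hσ : ∀ i, s ≤ sys.σ i) (hs : 0 < s)
    (hδ : 0 < δ) (hη : 0 < η) (k : ℕ) (x : EuclideanSpace ℝ (Fin d)) :
    (Aset sys U η k δ x).Finite ∧
      (Aset sys U η k δ x).ncard * ENNReal.ofReal ((s * δ / η) ^ d * ε₀) ≤
        volume (closedBall x (2 * δ)) := by
  obtain ⟨-, hopen, hbdd, hinv, hdisj, hε₀, hvol⟩ := hosc
  have hinj i := injective_of_dist_eq_mul (sys.σ_pos i) (hsim i)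
  refine finite_and_ncard_mul_le_of_pairwiseDisjoint
    (s := fun α => mapWord sys α '' U (k + α.length)) (by positivity)
    measure_closedBall_lt_top.ne
    ((pairwiseDisjoint_mapWord_image_Jset hη.le hinv hdisj hinj).subset fun _ h => h.1)
    (fun α _ => measurableSet_image_of_dist_eq_mul (sigmaWord_pos sys α) (dist_mapWord hsim α)
      (hopen _).measurableSet)
    (fun α hα => (image_mono subset_closure).trans
      (mapWord_image_subset_closedBall_of_mem_Jset hsim hα.1
        (hbdd.subset (subset_iUnion U _)).closure (hUη _) hα.2))
    (fun α hα => ?_)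
  rw [volume_image_of_dist_eq_mul (sigmaWord_pos sys α) (dist_mapWord hsim α),
    finrank_euclideanSpace_fin, ENNReal.ofReal_mul (by positivity)]
  gcongr
  · exact (div_le_iff₀ hη).2 (mul_le_sigmaWord_mul_of_mem_Jset hσ hδ.le hα.1)
  · exact hvol _

/-- For a non-autonomous IFS of similarities satisfying the
generalised Moran open-set condition with `inf{σ_i} = σ* > 0`, the set
`A^k_δ = {α ∈ J^k_δ : f_α(closure U^{n_α}) ∩ B_δ(x) ≠ ∅}` has cardinality at
most `κ₀ = λ(B_1(0)) (2η/σ*)^d / ε₀`, uniformly in `k`, `δ` and `x`. -/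
theorem card_A_delta_le {d : ℕ}
    (sys : NAIFS (EuclideanSpace ℝ (Fin d)))
    (hsim : ∀ i x y, dist (sys.f i x) (sys.f i y) = sys.σ i * dist x y)
    (U : ℕ → Set (EuclideanSpace ℝ (Fin d))) (ε₀ : ℝ)
    (hosc : GenMoranOSC sys U ε₀)
    (σstar : ℝ) (hσstar : σstar = sInf (Set.range sys.σ)) (hσpos : 0 < σstar)
    (η : ℝ) (hη : η = ⨆ k, diam (closure (U k))) :
    ∀ (k : ℕ) (δ : ℝ), 0 < δ → δ ≤ η → ∀ x : EuclideanSpace ℝ (Fin d),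
      {α ∈ Jset sys η k δ |
        (mapWord sys α '' closure (U (k + α.length)) ∩ closedBall x δ).Nonempty}.Finite ∧
      (({α ∈ Jset sys η k δ |
        (mapWord sys α '' closure (U (k + α.length)) ∩ closedBall x δ).Nonempty}.ncard : ℝ) ≤
        (volume (closedBall (0 : EuclideanSpace ℝ (Fin d)) 1)).toReal *
          (2 * η / σstar) ^ d / ε₀) := by
  intro k δ hδ hδη x
  show (Aset sys U η k δ x).Finite ∧ ((Aset sys U η k δ x).ncard : ℝ) ≤ _
  have hε₀ : 0 < ε₀ := hosc.2.2.2.2.2.1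
  have hη0 : 0 < η := hδ.trans_le hδη
  have hUη : ∀ m, diam (closure (U m)) ≤ η := fun m => hη ▸ le_ciSup
    ⟨diam (closure (⋃ k, U k)), forall_mem_range.2 fun m => diam_mono
      (closure_mono (subset_iUnion U m)) hosc.2.2.1.closure⟩ m
  have hσ : ∀ i, σstar ≤ sys.σ i := fun i => hσstar ▸
    csInf_le ⟨0, forall_mem_range.2 fun j => (sys.σ_pos j).le⟩ (mem_range_self i)
  obtain ⟨hfin, hcard⟩ := finite_Aset_and_ncard_mul_le hsim hosc hUη hσ hσpos hδ hη0 k x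
  refine ⟨hfin, ?_⟩
  have hreal := ENNReal.toReal_mono measure_closedBall_lt_top.ne hcard
  rw [ENNReal.toReal_mul, ENNReal.toReal_ofReal (by positivity), ENNReal.toReal_natCast,
    ← measureReal_def, Measure.addHaar_real_closedBall' volume x (by positivity),
    finrank_euclideanSpace_fin] at hreal
  have hscale : (2 * δ) ^ d = (2 * η / σstar) ^ d * (σstar * δ / η) ^ d := by
    rw [← mul_pow]
    field_simp
  rw [le_div_iff₀ hε₀]
  refine le_of_mul_le_mul_right ?_ (by positivity : 0 < (σstar * δ / η) ^ d)
  calc _ = _ * ((σstar * δ / η) ^ d * ε₀) := by ring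
    _ ≤ (2 * δ) ^ d * volume.real (closedBall (0 : EuclideanSpace ℝ (Fin d)) 1) := hreal
    _ = _ := by rw [hscale, measureReal_def]; ring
end
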